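/- arXiv:1407.1614 — 3 statements merged into one kernel-verified Lean document; each statement's English description precedes it below -/
import Mathlib

section
/- Fix a constant $c_1$ with $0 < c_1 < 1$ and a real number $t$ with $t > \frac{1}{2}\left(\ln 2 + \ln \frac{c_1^2+1}{(c_1-1)^2}\right)$. Then for every complex number $z_1$ with $|z_1| = c_1$ one has $|\cosh t + z_1 \sinh t| > 1$. -/
theorem abs_cosh_add_mul_sinh_gt_one (c₁ t : ℝ) (hc₁ : 0 < c₁) (hc₁' : c₁ < 1)
    (ht : t > (1 / 2) * (Real.log 2 + Real.log ((c₁ ^ 2 + 1) / (c₁ - 1) ^ 2)))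
    (z₁ : ℂ) (hz₁ : ‖z₁‖ = c₁) :
    ‖(Real.cosh t : ℂ) + z₁ * (Real.sinh t : ℂ)‖ > 1 := by
  set A : ℝ := (c₁ ^ 2 + 1) / (c₁ - 1) ^ 2 with hA
  set B : ℝ := (1 + c₁) / (1 - c₁) with hB
  have hc1 : (0:ℝ) < 1 - c₁ := by linarith
  have hd : 0 < (c₁ - 1) ^ 2 := by nlinarith
  have hApos : 0 < A := div_pos (by positivity) hd
  have hBpos : 1 < B := by
    rw [hB, lt_div_iff₀ hc1]; linarith
  -- 2A > B^2
  have hkey : B ^ 2 < 2 * A := by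
    rw [hB, hA, div_pow, ← mul_div_assoc, div_lt_div_iff₀ (by positivity) hd]
    nlinarith [sq_nonneg (c₁ - 1), sq_nonneg c₁, sq_nonneg (c₁*(c₁-1))]
  have hlog : Real.log B < t := by
    have h1 : Real.log 2 + Real.log A = Real.log (2 * A) :=
      (Real.log_mul (by norm_num) (ne_of_gt hApos)).symm
    have h2 : Real.log (B ^ 2) < Real.log (2 * A) :=
      Real.log_lt_log (by positivity) hkey
    rw [Real.log_pow] at h2
    rw [h1] at ht
    push_cast at h2
    linarith
  have hexp : B < Real.exp t := by
    calc B = Real.exp (Real.log B) := (Real.exp_log (by linarith)).symm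
    _ < Real.exp t := Real.exp_lt_exp.mpr hlog
  have hexp1 : 1 < Real.exp t := lt_trans hBpos hexp
  have hexpB : (1 + c₁) < (1 - c₁) * Real.exp t := by
    rw [hB, div_lt_iff₀ hc1] at hexp; linarith
  have hinv : Real.exp t * Real.exp (-t) = 1 := by
    rw [← Real.exp_add]; simp
  have hexpneg : 0 < Real.exp (-t) := Real.exp_pos _
  have hmain : 1 < Real.cosh t - c₁ * Real.sinh t := by
    rw [Real.cosh_eq, Real.sinh_eq]
    nlinarith [hexpB, hexp1, hinv, hexpneg, mul_pos hc1 (sub_pos.mpr hexp1)]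
  have hsinh : 0 ≤ Real.sinh t := by
    rw [Real.sinh_eq]
    nlinarith [hinv, hexp1, hexpneg]
  have hcosh : 0 ≤ Real.cosh t := (Real.cosh_pos t).le
  have htri : ‖(Real.cosh t : ℂ)‖ - ‖z₁ * (Real.sinh t : ℂ)‖ ≤
      ‖(Real.cosh t : ℂ) + z₁ * (Real.sinh t : ℂ)‖ := by
    have := norm_sub_norm_le ((Real.cosh t : ℂ)) (-(z₁ * (Real.sinh t : ℂ)))
    simpa [sub_neg_eq_add] using this
  have h1 : ‖(Real.cosh t : ℂ)‖ = Real.cosh t := by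
    rw [Complex.norm_real, Real.norm_of_nonneg hcosh]
  have h2 : ‖z₁ * (Real.sinh t : ℂ)‖ = c₁ * Real.sinh t := by
    rw [norm_mul, hz₁, Complex.norm_real, Real.norm_of_nonneg hsinh]
  rw [h1, h2] at htri
  linarith
end

section
/- Let $0 < c_1, \ldots, c_d < 1$ with $\sum_{j=1}^d c_j^2 = 1$ and $d \geq 2$, and let $L = \{(z_1,\ldots,z_d) \in \mathbb{S}^{2d-1} : |z_j| = c_j \text{ for all } j\}$. Then for $t > \frac{1}{2}(\ln 2 + \ln \frac{c_1^2+1}{(c_1-1)^2})$, the map $\tau_t(z) = \frac{1}{\cosh t + z_1\sinh t}(\sinh t + z_1\cosh t, z_2,\ldots,z_d)$ satisfies $\tau_t(L) \cap L = \emptyset$. -/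
/-- Giroux's map `τ_t` on `ℂ^{d+1}`. -/
noncomputable def tau (d : ℕ) (t : ℝ) (z : Fin (d + 1) → ℂ) : Fin (d + 1) → ℂ :=
  fun j =>
    if j = 0 then
      ((Real.sinh t : ℂ) + z 0 * (Real.cosh t : ℂ)) /
        ((Real.cosh t : ℂ) + z 0 * (Real.sinh t : ℂ))
    else z j / ((Real.cosh t : ℂ) + z 0 * (Real.sinh t : ℂ))

/-!
Only the first coordinate matters: there `τ_t` is `w ↦ (b + w a) / (a + w b)` with
`a = cosh t`, `b = sinh t`, and
`|b + w a|² - |w|² |a + w b|² = (1 - |w|²) ((1 + |w|²) b² + 2 a b Re w)`.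
For `|w| = c < 1` the right-hand side is at least `(1 - c²) b ((1 + c²) b - 2 c a)`, which is
positive once `tanh t > 2c / (1 + c²)`, i.e. `e^{2t} > ((1 + c) / (1 - c))²`; the bound on `t`
implies this because `(1 + c)² ≤ 2 (1 + c²)`. So `τ_t` strictly increases `|z₁|` on `L`.
-/

open Real

namespace Complex

theorem normSq_add_mul_sub_normSq_mul_normSq (a b : ℝ) (w : ℂ) :
    normSq (b + w * a) - normSq w * normSq (a + w * b) =
      (1 - normSq w) * ((1 + normSq w) * b ^ 2 + 2 * w.re * a * b) := by
  simp only [normSq_apply, add_re, add_im, mul_re, mul_im, ofReal_re, ofReal_im]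
  ring

theorem norm_lt_norm_add_mul_div_add_mul {a b : ℝ} {w : ℂ} (hw : ‖w‖ < 1) (hb : 0 < b) (hba : b < a)
    (hab : 2 * ‖w‖ * a < (1 + ‖w‖ ^ 2) * b) :
    ‖w‖ < ‖(b + w * a) / (a + w * b)‖ := by
  have ha : 0 < a := hb.trans hba
  have hre : -‖w‖ ≤ w.re := neg_le_of_abs_le (abs_re_le_norm w)
  have hden : 0 < ‖(a : ℂ) + w * b‖ := by
    have : a - ‖w‖ * b ≤ ‖(a : ℂ) + w * b‖ :=
      calc a - ‖w‖ * b = ‖(a : ℂ)‖ - ‖w * b‖ := by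
            rw [norm_mul, norm_real, norm_real, Real.norm_of_nonneg ha.le,
              Real.norm_of_nonneg hb.le]
        _ ≤ ‖(a : ℂ) + w * b‖ := norm_sub_le_norm_add _ _
    nlinarith
  have hsq : normSq w * normSq (a + w * b) < normSq (b + w * a) := by
    have hpos : 0 < (1 - normSq w) * ((1 + normSq w) * b ^ 2 + 2 * w.re * a * b) := by
      rw [normSq_eq_norm_sq]
      apply mul_pos (by nlinarith [norm_nonneg w])
      nlinarith [mul_le_mul_of_nonneg_right hre (by positivity : (0 : ℝ) ≤ 2 * a * b)]
    linarith [normSq_add_mul_sub_normSq_mul_normSq a b w]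
  rw [norm_div, lt_div_iff₀ hden]
  simp only [normSq_eq_norm_sq, ← mul_pow] at hsq
  exact lt_of_pow_lt_pow_left₀ 2 (norm_nonneg _) hsq

end Complex

theorem sinh_mul_sub_cosh_mul_eq (c t : ℝ) :
    (1 + c ^ 2) * sinh t - 2 * c * cosh t = ((1 - c) ^ 2 * exp t - (1 + c) ^ 2 * exp (-t)) / 2 := by
  rw [cosh_eq, sinh_eq]
  ring

theorem two_mul_mul_cosh_lt_of_sq_lt {c t : ℝ} (h : (1 + c) ^ 2 < (1 - c) ^ 2 * exp (2 * t)) :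
    2 * c * cosh t < (1 + c ^ 2) * sinh t := by
  have hexp : exp (2 * t) * exp (-t) = exp t := by rw [← exp_add]; ring_nf
  have := mul_lt_mul_of_pos_right h (exp_pos (-t))
  rw [mul_assoc, hexp] at this
  linarith [sinh_mul_sub_cosh_mul_eq c t]

theorem sq_one_add_lt_of_log_lt {c t : ℝ} (hc : c ≠ 1)
    (ht : t > (1 / 2) * (log 2 + log ((c ^ 2 + 1) / (c - 1) ^ 2))) :
    (1 + c) ^ 2 < (1 - c) ^ 2 * exp (2 * t) := by
  have hsq : 0 < (c - 1) ^ 2 := sq_pos_of_ne_zero (sub_ne_zero.mpr hc)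
  have hlog : log (2 * ((c ^ 2 + 1) / (c - 1) ^ 2)) < 2 * t := by
    rw [log_mul two_ne_zero (by positivity)]
    linarith
  rw [log_lt_iff_lt_exp (by positivity), mul_div_assoc', div_lt_iff₀ hsq] at hlog
  nlinarith [sq_nonneg (1 - c)]

theorem tau_displaces_toric_fiber_general (d : ℕ) (c : Fin (d + 1) → ℝ)
    (hc : ∀ j, 0 < c j ∧ c j < 1) (t : ℝ)
    (ht : t > (1 / 2) * (Real.log 2 + Real.log ((c 0 ^ 2 + 1) / (c 0 - 1) ^ 2))) :
    (tau d t '' {z : Fin (d + 1) → ℂ | (∑ j, ‖z j‖ ^ 2 = 1) ∧ ∀ j, ‖z j‖ = c j}) ∩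
      {z : Fin (d + 1) → ℂ | (∑ j, ‖z j‖ ^ 2 = 1) ∧ ∀ j, ‖z j‖ = c j} = ∅ := by
  obtain ⟨hc₀, hc₁⟩ := hc 0
  have hcosh : 2 * c 0 * cosh t < (1 + c 0 ^ 2) * sinh t :=
    two_mul_mul_cosh_lt_of_sq_lt (sq_one_add_lt_of_log_lt hc₁.ne ht)
  have hsinh : 0 < sinh t := by nlinarith [cosh_pos t]
  refine Set.eq_empty_iff_forall_notMem.mpr ?_
  rintro _ ⟨⟨z, ⟨-, hz⟩, rfl⟩, -, hτz⟩
  have hz₀ := hz 0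
  have hlt := Complex.norm_lt_norm_add_mul_div_add_mul (hz₀ ▸ hc₁) hsinh (sinh_lt_cosh t)
    (hz₀ ▸ hcosh)
  have hτz₀ := hτz 0
  simp only [tau, if_pos] at hτz₀
  linarith

theorem tau_displaces_toric_fiber (d : ℕ) (hd : 1 ≤ d) (c : Fin (d + 1) → ℝ)
    (hc : ∀ j, 0 < c j ∧ c j < 1) (hsum : ∑ j, c j ^ 2 = 1) (t : ℝ)
    (ht : t > (1 / 2) * (Real.log 2 + Real.log ((c 0 ^ 2 + 1) / (c 0 - 1) ^ 2))) :
    (tau d t '' {z : Fin (d + 1) → ℂ | (∑ j, ‖z j‖ ^ 2 = 1) ∧ ∀ j, ‖z j‖ = c j}) ∩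
      {z : Fin (d + 1) → ℂ | (∑ j, ‖z j‖ ^ 2 = 1) ∧ ∀ j, ‖z j‖ = c j} = ∅ :=
  tau_displaces_toric_fiber_general d c hc t ht
end

section
/- Let $v_1, \ldots, v_N \in \mathbb{Z}^d$ with $v_j = e_j$ (the $j$-th standard basis vector) for $j = 1,\ldots,d-1$. Write $v_j = (v_{j,1},\ldots,v_{j,d})$. Suppose at least one of $v_{d,d},\ldots,v_{N,d}$ is positive. Then there exist real numbers $a_1, \ldots, a_N > 0$ such that $R = \sum_{j=1}^N a_j v_j$ has integer coordinates and last coordinate equal to $1$; in particular $\{v_1,\ldots,v_{d-1}, R\}$ is a $\mathbb{Z}$-basis of $\mathbb{Z}^d$. -/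
theorem span_aux_reeb (d : ℕ) (hd : 2 ≤ d) (R : Fin d → ℤ)
    (hRL : R ⟨d - 1, by omega⟩ = 1) :
    Submodule.span ℤ
        ((Set.range fun j : Fin (d - 1) =>
            (fun k : Fin d => if (k : ℕ) = (j : ℕ) then (1 : ℤ) else 0)) ∪ {R}) = ⊤ := by
  have hmemE : ∀ j : Fin (d - 1),
      (fun k : Fin d => if (k : ℕ) = (j : ℕ) then (1:ℤ) else 0) ∈ Submodule.span ℤ
        ((Set.range fun j : Fin (d - 1) =>
            (fun k : Fin d => if (k : ℕ) = (j : ℕ) then (1 : ℤ) else 0)) ∪ {R}) :=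
    fun j => Submodule.subset_span (Set.mem_union_left _ ⟨j, rfl⟩)
  have hRmem : R ∈ Submodule.span ℤ
        ((Set.range fun j : Fin (d - 1) =>
            (fun k : Fin d => if (k : ℕ) = (j : ℕ) then (1 : ℤ) else 0)) ∪ {R}) :=
    Submodule.subset_span (Set.mem_union_right _ rfl)
  have hE : ∀ i : Fin d,
      (fun k : Fin d => if (k : ℕ) = (i : ℕ) then (1:ℤ) else 0) ∈ Submodule.span ℤ
        ((Set.range fun j : Fin (d - 1) =>
            (fun k : Fin d => if (k : ℕ) = (j : ℕ) then (1 : ℤ) else 0)) ∪ {R}) := by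
    intro i
    by_cases hi : (i : ℕ) < d - 1
    · exact hmemE ⟨(i : ℕ), hi⟩
    · have hiL : (i : ℕ) = d - 1 := by
        have := i.isLt
        omega
      have hEL : (fun k : Fin d => if (k : ℕ) = (i : ℕ) then (1:ℤ) else 0)
          = R - ∑ j : Fin (d - 1), R ⟨(j : ℕ), by omega⟩ •
              (fun k : Fin d => if (k : ℕ) = (j : ℕ) then (1:ℤ) else 0) := by
        funext k
        simp only [Pi.sub_apply, Finset.sum_apply, Pi.smul_apply, smul_eq_mul,
          mul_ite, mul_one, mul_zero]
        by_cases hk : (k : ℕ) < d - 1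
        · have hsum : ∑ j : Fin (d - 1),
              (if (k : ℕ) = (j : ℕ) then R ⟨(j : ℕ), by omega⟩ else 0) = R k := by
            rw [Finset.sum_eq_single (⟨(k : ℕ), hk⟩ : Fin (d - 1))]
            · have : (⟨(k : ℕ), by omega⟩ : Fin d) = k := Fin.ext rfl
              simp [this]
            · intro j _ hne
              have : ¬ ((k : ℕ) = (j : ℕ)) := by
                intro h
                exact hne (Fin.ext h.symm)
              simp [this]
            · intro h; exact absurd (Finset.mem_univ _) h
          rw [hsum]
          have : ¬ ((k : ℕ) = (i : ℕ)) := by omega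
          simp [this]
        · have hkL : (k : ℕ) = (i : ℕ) := by
            have := k.isLt
            omega
          have hkeq : k = (⟨d - 1, by omega⟩ : Fin d) := Fin.ext (by simp; omega)
          have hsum : ∑ j : Fin (d - 1),
              (if (k : ℕ) = (j : ℕ) then R ⟨(j : ℕ), by omega⟩ else 0) = 0 := by
            apply Finset.sum_eq_zero
            intro j _
            have : ¬ ((k : ℕ) = (j : ℕ)) := by
              have := j.isLt
              omega
            simp [this]
          rw [hsum, hkeq, hRL]
          simp [hiL]
      rw [hEL]
      exact Submodule.sub_mem _ hRmem
        (Submodule.sum_mem _ fun j _ => Submodule.smul_mem _ _ (hmemE j))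
  rw [eq_top_iff]
  intro x _
  have hx : x = ∑ i : Fin d, x i •
      (fun k : Fin d => if (k : ℕ) = (i : ℕ) then (1:ℤ) else 0) := by
    funext k
    rw [Finset.sum_apply]
    simp only [Pi.smul_apply, smul_eq_mul, mul_ite, mul_one, mul_zero]
    rw [Finset.sum_eq_single k]
    · simp
    · intro i _ hne
      have : ¬ ((k : ℕ) = (i : ℕ)) := by
        intro h
        exact hne (Fin.ext h).symm
      simp [this]
    · intro h; exact absurd (Finset.mem_univ _) h
  rw [hx]
  exact Submodule.sum_mem _ fun i _ => Submodule.smul_mem _ _ (hE i)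

set_option maxHeartbeats 1600000 in
theorem exists_integral_reeb_vector (d N : ℕ) (hd : 2 ≤ d) (hdN : d ≤ N)
    (v : Fin N → (Fin d → ℤ))
    (hstd : ∀ j : Fin N, (j : ℕ) < d - 1 →
      v j = fun k : Fin d => if (k : ℕ) = (j : ℕ) then (1 : ℤ) else 0)
    (hpos : ∃ j : Fin N, d - 1 ≤ (j : ℕ) ∧ 0 < v j ⟨d - 1, by omega⟩) :
    ∃ (a : Fin N → ℝ) (R : Fin d → ℤ),
      (∀ j, 0 < a j) ∧
      (∀ k, (R k : ℝ) = ∑ j, a j * (v j k : ℝ)) ∧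
      R ⟨d - 1, by omega⟩ = 1 ∧
      Submodule.span ℤ
        ((Set.range fun j : Fin (d - 1) =>
            (fun k : Fin d => if (k : ℕ) = (j : ℕ) then (1 : ℤ) else 0)) ∪ {R}) = ⊤ := by
  obtain ⟨j0, hj0, hm⟩ := hpos
  have hL : (⟨d - 1, by omega⟩ : Fin d) = ⟨d - 1, by omega⟩ := rfl
  set L : Fin d := ⟨d - 1, by omega⟩ with hLdef
  have hvL : ∀ j : Fin N, (j : ℕ) < d - 1 → v j L = 0 := by
    intro j hj
    rw [hstd j hj]
    have : ¬ (d - 1 = (j : ℕ)) := by omega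
    simp [hLdef, this]
  -- Step 1: obtain the tail coefficients b
  obtain ⟨b, hbzero, hbpos, hbL⟩ :
      ∃ b : Fin N → ℝ,
        (∀ j : Fin N, (j : ℕ) < d - 1 → b j = 0) ∧
        (∀ j : Fin N, ¬ (j : ℕ) < d - 1 → 0 < b j) ∧
        (∑ j, b j * (v j L : ℝ)) = 1 := by
    have hmR : (0 : ℝ) < (v j0 L : ℝ) := by exact_mod_cast hm
    set T : Finset (Fin N) := Finset.univ.filter (fun j => d - 1 ≤ (j : ℕ)) with hT
    have hj0T : j0 ∈ T := Finset.mem_filter.mpr ⟨Finset.mem_univ _, hj0⟩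
    set S : ℝ := ∑ j ∈ T.erase j0, (v j L : ℝ) with hS
    set t : ℝ := 1 / (2 * (|S| + 1)) with ht
    have habs : (0:ℝ) < |S| + 1 := by positivity
    have ht0 : 0 < t := by positivity
    have htS : t * S < 1 := by
      have h1 : t * S ≤ t * |S| :=
        mul_le_mul_of_nonneg_left (le_abs_self S) ht0.le
      have h2 : t * |S| < 1 := by
        rw [ht, div_mul_eq_mul_div, one_mul, div_lt_one (by positivity)]
        nlinarith [abs_nonneg S]
      linarith
    refine ⟨fun j =>
      if (j : ℕ) < d - 1 then 0
      else if j = j0 then (1 - t * S) / (v j0 L : ℝ) else t, ?_, ?_, ?_⟩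
    · intro j hj; simp [hj]
    · intro j hj
      simp only [hj, if_false]
      by_cases h2 : j = j0
      · simp only [h2, if_pos rfl]
        exact div_pos (by linarith) hmR
      · simp only [if_neg h2]; exact ht0
    · have hsub : ∀ f : Fin N → ℝ, (∀ j ∉ T, f j = 0) → ∑ j, f j = ∑ j ∈ T, f j := by
        intro f hf
        symm
        exact Finset.sum_subset (Finset.subset_univ T) (fun j _ hj => hf j hj)
      rw [hsub _ ?vanish]
      case vanish =>
        intro j hjT
        have hjlt : (j : ℕ) < d - 1 := by
          by_contra h
          exact hjT (Finset.mem_filter.mpr ⟨Finset.mem_univ _, Nat.not_lt.mp h⟩)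
        simp [hjlt]
      rw [← Finset.add_sum_erase _ _ hj0T]
      have hbj0 : (if (j0 : ℕ) < d - 1 then (0:ℝ)
          else if j0 = j0 then (1 - t * S) / (v j0 L : ℝ) else t) = (1 - t * S) / (v j0 L : ℝ) := by
        simp [Nat.not_lt.mpr hj0]
      beta_reduce
      rw [hbj0]
      have he : ∑ j ∈ T.erase j0,
          (if (j : ℕ) < d - 1 then (0:ℝ)
            else if j = j0 then (1 - t * S) / (v j0 L : ℝ) else t) * (v j L : ℝ) = t * S := by
        rw [hS, Finset.mul_sum]
        apply Finset.sum_congr rfl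
        intro j hj
        obtain ⟨hne, hjT⟩ := Finset.mem_erase.mp hj
        have hge : d - 1 ≤ (j : ℕ) := (Finset.mem_filter.mp hjT).2
        simp [Nat.not_lt.mpr hge, hne]
      rw [he, div_mul_cancel₀ _ (ne_of_gt hmR)]
      ring
  -- Step 2: the partial sums r
  obtain ⟨r, hrdef⟩ : ∃ r : Fin d → ℝ, ∀ k, r k = ∑ j, b j * (v j k : ℝ) :=
    ⟨_, fun _ => rfl⟩
  have hrL : r L = 1 := by rw [hrdef]; exact hbL
  -- Step 3: the full coefficients a and the vector R
  obtain ⟨a, ha1, ha2⟩ :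
      ∃ a : Fin N → ℝ,
        (∀ j : Fin N, ∀ h : (j : ℕ) < d - 1,
          a j = (⌈r ⟨(j : ℕ), by omega⟩⌉ : ℝ) + 1 - r ⟨(j : ℕ), by omega⟩) ∧
        (∀ j : Fin N, ¬ (j : ℕ) < d - 1 → a j = b j) := by
    refine ⟨fun j => if h : (j : ℕ) < d - 1 then
        (⌈r ⟨(j : ℕ), by omega⟩⌉ : ℝ) + 1 - r ⟨(j : ℕ), by omega⟩ else b j, ?_, ?_⟩
    · intro j h; simp only [dif_pos h]
    · intro j h; simp only [dif_neg h]
  obtain ⟨R, hR1, hRL⟩ :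
      ∃ R : Fin d → ℤ,
        (∀ k : Fin d, (k : ℕ) < d - 1 → R k = ⌈r k⌉ + 1) ∧ R L = 1 := by
    refine ⟨fun k => if (k : ℕ) < d - 1 then ⌈r k⌉ + 1 else 1, ?_, ?_⟩
    · intro k hk; simp only [if_pos hk]
    · have : ¬ (d - 1 < d - 1) := lt_irrefl _
      simp [hLdef, this]
  have hapos : ∀ j, 0 < a j := by
    intro j
    by_cases h : (j : ℕ) < d - 1
    · rw [ha1 j h]
      have := Int.le_ceil (r ⟨(j : ℕ), by omega⟩)
      linarith
    · rw [ha2 j h]; exact hbpos j h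
  have hkey : ∀ k, (R k : ℝ) = ∑ j, a j * (v j k : ℝ) := by
    intro k
    have hsplit : ∑ j, a j * (v j k : ℝ)
        = r k + ∑ j, (a j - b j) * (v j k : ℝ) := by
      rw [hrdef, ← Finset.sum_add_distrib]
      apply Finset.sum_congr rfl
      intro j _
      ring
    rw [hsplit]
    by_cases hk : (k : ℕ) < d - 1
    · have hkN : (k : ℕ) < N := by omega
      obtain ⟨jk, hjk⟩ : ∃ jk : Fin N, (jk : ℕ) = (k : ℕ) := ⟨⟨(k : ℕ), hkN⟩, rfl⟩
      have hjk' : (jk : ℕ) < d - 1 := by omega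
      have hsum : ∑ j, (a j - b j) * (v j k : ℝ)
          = (a jk - b jk) * (v jk k : ℝ) := by
        apply Finset.sum_eq_single jk
        · intro j _ hne
          by_cases hjd : (j : ℕ) < d - 1
          · have hvjk : v j k = 0 := by
              rw [hstd j hjd]
              have : ¬ ((k : ℕ) = (j : ℕ)) := by
                intro hh
                exact hne (Fin.ext (by simp [hjk, ← hh]))
              simp [this]
            rw [hvjk]
            push_cast
            ring
          · rw [ha2 j hjd]; ring
        · intro h; exact absurd (Finset.mem_univ jk) h
      rw [hsum]
      have hv1 : v jk k = 1 := by
        rw [hstd jk hjk']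
        simp [hjk]
      have hbjk : b jk = 0 := hbzero jk hjk'
      have hkk : (⟨(jk : ℕ), by omega⟩ : Fin d) = k := Fin.ext (by simp [hjk])
      rw [hv1, hbjk, ha1 jk hjk', hkk, hR1 k hk]
      push_cast
      ring
    · have hkL : k = L := by
        apply Fin.ext
        have := k.isLt
        simp only [hLdef]
        omega
      have hzero : ∑ j, (a j - b j) * (v j k : ℝ) = 0 := by
        apply Finset.sum_eq_zero
        intro j _
        by_cases hjd : (j : ℕ) < d - 1
        · have hvjk : v j k = 0 := by rw [hkL]; exact hvL j hjd
          rw [hvjk]; push_cast; ring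
        · rw [ha2 j hjd]; ring
      rw [hzero, hkL, hrL, hRL]
      norm_num
  exact ⟨a, R, hapos, hkey, hRL, span_aux_reeb d hd R hRL⟩
end
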